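/- If the covariance matrix of gradients C = E[∇f(X)∇f(X)ᵀ] has eigendecomposition C = W Λ Wᵀ with eigenvalues λ₁ ≥ … ≥ λ_m and λ_{r+1} = … = λ_m = 0, then for the inactive eigenvector matrix W₂ (columns the eigenvectors for the zero eigenvalues), W₂ᵀ ∇f(X) = 0 almost surely; consequently if the support of ρ is open and connected, f is almost surely constant along directions in the span of W₂. -/

import Mathlib

open Matrix MeasureTheory

/-!
Since `W` is orthogonal, `Λ i = wᵢᵀ C wᵢ = E[(wᵢ ⬝ ∇f(X))²]` for the `i`-th column `wᵢ` of `W`,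
so for an inactive column the nonnegative integrand vanishes almost surely. The directional
derivative `x ↦ ∇f(x) ⬝ wᵢ` is continuous, and every nonempty open subset of `S` has positive
probability under `X`, so it vanishes on all of `S`. Hence `∇f` kills the span of the inactive
columns on `S`, and `f` is constant along any segment in `S` pointing in such a direction.
-/

section SecondMoment

variable {Ω ι : Type*} [MeasurableSpace Ω] [Fintype ι] {μ : Measure Ω} {g : Ω → ι → ℝ}

theorem sq_dotProduct_eq_sum_sum (v w : ι → ℝ) :
    (v ⬝ᵥ w) ^ 2 = ∑ i, ∑ j, v i * v j * (w i * w j) := by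
  simp only [sq, dotProduct, Finset.sum_mul_sum]
  exact Finset.sum_congr rfl fun i _ => Finset.sum_congr rfl fun j _ => by ring

theorem integrable_sq_dotProduct (hg : ∀ i j, Integrable (fun ω => g ω i * g ω j) μ)
    (v : ι → ℝ) : Integrable (fun ω => (v ⬝ᵥ g ω) ^ 2) μ := by
  simp only [sq_dotProduct_eq_sum_sum]
  exact integrable_finsetSum _ fun i _ => integrable_finsetSum _ fun j _ =>
    (hg i j).const_mul _

theorem integral_sq_dotProduct (hg : ∀ i j, Integrable (fun ω => g ω i * g ω j) μ)
    (v : ι → ℝ) :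
    ∫ ω, (v ⬝ᵥ g ω) ^ 2 ∂μ = v ⬝ᵥ (of (fun i j => ∫ ω, g ω i * g ω j ∂μ) *ᵥ v) := by
  simp only [sq_dotProduct_eq_sum_sum]
  rw [integral_finsetSum _ fun i _ => integrable_finsetSum _ fun j _ => (hg i j).const_mul _]
  simp_rw [integral_finsetSum _ fun j _ => (hg _ j).const_mul _, integral_const_mul]
  simp only [dotProduct, mulVec, of_apply, Finset.mul_sum]
  exact Finset.sum_congr rfl fun i _ => Finset.sum_congr rfl fun j _ => by ring

theorem ae_dotProduct_eq_zero_of_quadForm_eq_zero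
    (hg : ∀ i j, Integrable (fun ω => g ω i * g ω j) μ) {v : ι → ℝ}
    (hv : v ⬝ᵥ (of (fun i j => ∫ ω, g ω i * g ω j ∂μ) *ᵥ v) = 0) :
    ∀ᵐ ω ∂μ, v ⬝ᵥ g ω = 0 := by
  rw [← integral_sq_dotProduct hg,
    integral_eq_zero_iff_of_nonneg (fun ω => sq_nonneg _) (integrable_sq_dotProduct hg v)] at hv
  filter_upwards [hv] with ω hω using sq_eq_zero_iff.mp hω

end SecondMoment

theorem transpose_row_dotProduct_mulVec {ι : Type*} [Fintype ι] (W M : Matrix ι ι ℝ) (i : ι) :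
    Wᵀ i ⬝ᵥ (M *ᵥ Wᵀ i) = (Wᵀ * M * W) i i := by
  simp only [mul_apply, mulVec, dotProduct, transpose_apply, Finset.sum_mul, Finset.mul_sum]
  rw [Finset.sum_comm]
  exact Finset.sum_congr rfl fun a _ => Finset.sum_congr rfl fun b _ => by ring

theorem transpose_row_dotProduct_mulVec_of_orthogonal {ι : Type*} [Fintype ι] [DecidableEq ι]
    {W : Matrix ι ι ℝ} (hW : Wᵀ * W = 1) (Λ : ι → ℝ) (i : ι) :
    Wᵀ i ⬝ᵥ ((W * diagonal Λ * Wᵀ) *ᵥ Wᵀ i) = Λ i := by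
  rw [transpose_row_dotProduct_mulVec]
  simp only [Matrix.mul_assoc, hW, Matrix.mul_one, ← Matrix.mul_assoc Wᵀ W, Matrix.one_mul,
    diagonal_apply_eq]

theorem ContinuousLinearMap.apply_eq_dotProduct {ι : Type*} [Fintype ι] [DecidableEq ι]
    (L : (ι → ℝ) →L[ℝ] ℝ) (v : ι → ℝ) : L v = v ⬝ᵥ fun i => L (Pi.single i 1) := by
  conv_lhs => rw [← Finset.univ_sum_single v, map_sum]
  refine Finset.sum_congr rfl fun i _ => ?_
  rw [← smul_eq_mul, ← map_smul, ← Pi.single_smul, smul_eq_mul, mul_one]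

theorem eqOn_of_ae_comp_eq {Ω E F : Type*} [MeasurableSpace Ω] [TopologicalSpace E]
    [TopologicalSpace F] [T1Space F] {μ : Measure Ω} {X : Ω → E} {S : Set E}
    (hS : IsOpen S) (hsupp : ∀ U : Set E, IsOpen U → U ⊆ S → U.Nonempty → 0 < μ (X ⁻¹' U))
    {h : E → F} (hh : Continuous h) {c : F} (hae : ∀ᵐ ω ∂μ, h (X ω) = c) :
    ∀ x ∈ S, h x = c := by
  by_contra! ⟨x, hxS, hx⟩
  have hU : IsOpen (S ∩ h ⁻¹' {c}ᶜ) := hS.inter (isOpen_compl_singleton.preimage hh)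
  refine (hsupp _ hU Set.inter_subset_left ⟨x, hxS, hx⟩).ne'
    (measure_eq_zero_iff_ae_notMem.mpr ?_)
  filter_upwards [hae] with ω hω using fun hmem => hmem.2 hω

theorem eq_of_fderiv_apply_sub_eq_zero {E F : Type*} [NormedAddCommGroup E] [NormedSpace ℝ E]
    [NormedAddCommGroup F] [NormedSpace ℝ F] {f : E → F} {x y : E}
    (hf : ∀ z ∈ segment ℝ x y, DifferentiableAt ℝ f z)
    (h : ∀ z ∈ segment ℝ x y, fderiv ℝ f z (y - x) = 0) : f x = f y := by
  set γ : ℝ → E := fun t => AffineMap.lineMap (k := ℝ) x y t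
  have hγ : ∀ t ∈ Set.Icc (0 : ℝ) 1, γ t ∈ segment ℝ x y := fun t ht =>
    segment_eq_image_lineMap ℝ x y ▸ ⟨t, ht, rfl⟩
  have hderiv : ∀ t ∈ Set.Icc (0 : ℝ) 1, HasDerivAt (f ∘ γ) 0 t := fun t ht => by
    simpa [h _ (hγ t ht)] using
      (hf _ (hγ t ht)).hasFDerivAt.comp_hasDerivAt t AffineMap.hasDerivAt_lineMap
  have := constant_of_has_deriv_right_zero
    (fun t ht => (hderiv t ht).continuousAt.continuousWithinAt)
    (fun t ht => (hderiv t (Set.Ico_subset_Icc_self ht)).hasDerivWithinAt) 1 (by simp)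
  simpa [γ] using this.symm

theorem inactive_subspace_gradient_vanishes_general {m : ℕ} {Ω : Type*} [MeasurableSpace Ω]
    (μ : Measure Ω)
    (f : (Fin m → ℝ) → ℝ) (hf : ContDiff ℝ 1 f)
    (X : Ω → (Fin m → ℝ))
    (g : Ω → Fin m → ℝ)
    (hg : g = fun ω i => fderiv ℝ f (X ω) (Pi.single i 1))
    (hInt : ∀ i j, Integrable (fun ω => g ω i * g ω j) μ)
    (C : Matrix (Fin m) (Fin m) ℝ)
    (hC : C = Matrix.of fun i j => ∫ ω, g ω i * g ω j ∂μ)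
    (W : Matrix (Fin m) (Fin m) ℝ) (Λ : Fin m → ℝ)
    (hW : W * Wᵀ = 1 ∧ Wᵀ * W = 1)
    (hdecomp : C = W * Matrix.diagonal Λ * Wᵀ)
    (r : ℕ) (hzero : ∀ i : Fin m, r ≤ (i : ℕ) → Λ i = 0)
    (S : Set (Fin m → ℝ)) (hSopen : IsOpen S)
    (hsupp : ∀ U : Set (Fin m → ℝ), IsOpen U → U ⊆ S → U.Nonempty → 0 < μ (X ⁻¹' U)) :
    (∀ i : Fin m, r ≤ (i : ℕ) → ∀ᵐ ω ∂μ, (fun a => W a i) ⬝ᵥ g ω = 0) ∧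
      ∀ x ∈ S, ∀ y ∈ S,
        y - x ∈ Submodule.span ℝ
            {c : Fin m → ℝ | ∃ i : Fin m, r ≤ (i : ℕ) ∧ c = fun a => W a i} →
          segment ℝ x y ⊆ S → f x = f y := by
  have hae : ∀ i : Fin m, r ≤ (i : ℕ) → ∀ᵐ ω ∂μ, Wᵀ i ⬝ᵥ g ω = 0 := fun i hi =>
    ae_dotProduct_eq_zero_of_quadForm_eq_zero hInt <| by
      rw [← hC, hdecomp, transpose_row_dotProduct_mulVec_of_orthogonal hW.2, hzero i hi]
  have hgrad : ∀ ω v, v ⬝ᵥ g ω = fderiv ℝ f (X ω) v := fun ω v => by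
    rw [hg, (fderiv ℝ f (X ω)).apply_eq_dotProduct v]
  have hker : ∀ z ∈ S, ∀ i : Fin m, r ≤ (i : ℕ) → fderiv ℝ f z (Wᵀ i) = 0 :=
    fun z hz i hi => eqOn_of_ae_comp_eq hSopen hsupp
      ((hf.continuous_fderiv one_ne_zero).clm_apply continuous_const)
      (by simpa only [hgrad] using hae i hi) z hz
  refine ⟨hae, fun x _ y _ hspan hseg => eq_of_fderiv_apply_sub_eq_zero
    (fun z _ => (hf.differentiable one_ne_zero).differentiableAt) fun z hz => ?_⟩
  have hspan_le : Submodule.span ℝ {c : Fin m → ℝ | ∃ i : Fin m, r ≤ (i : ℕ) ∧ c = Wᵀ i} ≤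
      LinearMap.ker (fderiv ℝ f z) :=
    Submodule.span_le.mpr <| by rintro _ ⟨i, hi, rfl⟩; exact hker z (hseg hz) i hi
  exact hspan_le hspan

/-- If the gradient covariance matrix `C = E[∇f(X)∇f(X)ᵀ]` has eigendecomposition
`C = W Λ Wᵀ` with `λ_{r+1} = … = λ_m = 0`, then the inactive eigenvector columns
kill the gradient almost surely: `W₂ᵀ ∇f(X) = 0` a.s.; and, the support `S` of the
input density being open and connected, `f` is constant along directions in the
span of the inactive eigenvectors (along segments contained in `S`). -/
theorem inactive_subspace_gradient_vanishes {m : ℕ} {Ω : Type*} [MeasurableSpace Ω]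
    (μ : Measure Ω) [IsProbabilityMeasure μ]
    (f : (Fin m → ℝ) → ℝ) (hf : ContDiff ℝ 1 f)
    (X : Ω → (Fin m → ℝ)) (hX : Measurable X)
    (g : Ω → Fin m → ℝ)
    (hg : g = fun ω i => fderiv ℝ f (X ω) (Pi.single i 1))
    (hInt : ∀ i j, Integrable (fun ω => g ω i * g ω j) μ)
    (C : Matrix (Fin m) (Fin m) ℝ)
    (hC : C = Matrix.of fun i j => ∫ ω, g ω i * g ω j ∂μ)
    (W : Matrix (Fin m) (Fin m) ℝ) (Λ : Fin m → ℝ)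
    (hW : W * Wᵀ = 1 ∧ Wᵀ * W = 1)
    (hdecomp : C = W * Matrix.diagonal Λ * Wᵀ)
    (hord : ∀ i j : Fin m, i ≤ j → Λ j ≤ Λ i)
    (r : ℕ) (hzero : ∀ i : Fin m, r ≤ (i : ℕ) → Λ i = 0)
    (S : Set (Fin m → ℝ)) (hSopen : IsOpen S) (hSconn : IsConnected S)
    (hsupp : ∀ U : Set (Fin m → ℝ), IsOpen U → U ⊆ S → U.Nonempty → 0 < μ (X ⁻¹' U))
    (hXS : ∀ᵐ ω ∂μ, X ω ∈ S) :
    (∀ i : Fin m, r ≤ (i : ℕ) → ∀ᵐ ω ∂μ, (fun a => W a i) ⬝ᵥ g ω = 0) ∧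
      ∀ x ∈ S, ∀ y ∈ S,
        y - x ∈ Submodule.span ℝ
            {c : Fin m → ℝ | ∃ i : Fin m, r ≤ (i : ℕ) ∧ c = fun a => W a i} →
          segment ℝ x y ⊆ S → f x = f y :=
  inactive_subspace_gradient_vanishes_general μ f hf X g hg hInt C hC W Λ hW hdecomp r hzero S
    hSopen hsupp
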